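/- Fix a prime power q ≥ 2 and a real x1 > 0. Define f(a) = 1 + x1/(x1 + (q-1)a) + (q-1)a/(2x1 + (q-2)a) for a ≥ 0. Then f attains its minimum on [0, ∞) at a* = ((√2·q - 2)/(q² - 2))·x1. -/

import Mathlib

/-!
Writing `g(a) = x/(x + k a) + k a/(2x + m a)`, the difference `g(a) - g(b)` factors as
`k x (a - b) (2(x + k a)(x + k b) - (2x + m a)(2x + m b))` over the four denominators.
At the critical point `b` of `g`, where `√2 (x + k b) = 2x + m b`, the middle factor becomes
`√2 (√2 k - m)(x + k b)(a - b)`, so `g(a) - g(b)` is a nonnegative multiple of `(a - b)²`.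
For `k = q - 1`, `m = q - 2` that point is `a* = ((√2 q - 2)/(q² - 2)) x`.
-/

namespace RandomAccess

noncomputable def tail (x k m a : ℝ) : ℝ := x / (x + k * a) + k * a / (2 * x + m * a)

variable {x k m a b : ℝ}

lemma tail_sub (ha₁ : x + k * a ≠ 0) (ha₂ : 2 * x + m * a ≠ 0)
    (hb₁ : x + k * b ≠ 0) (hb₂ : 2 * x + m * b ≠ 0) :
    tail x k m a - tail x k m b =
      k * x * (a - b) * (2 * (x + k * a) * (x + k * b) - (2 * x + m * a) * (2 * x + m * b)) /
        ((x + k * a) * (x + k * b) * ((2 * x + m * a) * (2 * x + m * b))) := by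
  rw [tail, tail, div_add_div _ _ ha₁ ha₂, div_add_div _ _ hb₁ hb₂,
    div_sub_div _ _ (mul_ne_zero ha₁ ha₂) (mul_ne_zero hb₁ hb₂),
    div_eq_div_iff (by positivity) (by positivity)]
  ring

lemma tail_le_of_sqrt_two_mul_eq (hx : 0 < x) (hk : 0 ≤ k) (hm : 0 ≤ m)
    (hmk : m ≤ √2 * k) (ha : 0 ≤ a) (hb : 0 ≤ b)
    (hcrit : √2 * (x + k * b) = 2 * x + m * b) :
    tail x k m b ≤ tail x k m a := by
  have ha₁ : 0 < x + k * a := by positivity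
  have ha₂ : 0 < 2 * x + m * a := by positivity
  have hb₁ : 0 < x + k * b := by positivity
  have hb₂ : 0 < 2 * x + m * b := by positivity
  have hmiddle : 2 * (x + k * a) * (x + k * b) - (2 * x + m * a) * (2 * x + m * b) =
      √2 * (√2 * k - m) * (x + k * b) * (a - b) := by
    linear_combination (√2 * (x + k * b) + (2 * x + m * a)) * hcrit
      - (x + k * a) * (x + k * b) * Real.sq_sqrt (zero_le_two : (0 : ℝ) ≤ 2)
  have hnum : 0 ≤ k * x * (a - b) * (√2 * (√2 * k - m) * (x + k * b) * (a - b)) := by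
    have : 0 ≤ √2 * k - m := sub_nonneg.mpr hmk
    rw [show k * x * (a - b) * (√2 * (√2 * k - m) * (x + k * b) * (a - b)) =
        k * x * √2 * (√2 * k - m) * (x + k * b) * (a - b) ^ 2 by ring]
    positivity
  rw [← sub_nonneg, tail_sub ha₁.ne' ha₂.ne' hb₁.ne' hb₂.ne', hmiddle]
  exact div_nonneg hnum (by positivity)

lemma sqrt_two_mul_eq_at_optimum (q x : ℝ) (hq : q ^ 2 - 2 ≠ 0) :
    √2 * (x + (q - 1) * ((√2 * q - 2) / (q ^ 2 - 2) * x)) =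
      2 * x + (q - 2) * ((√2 * q - 2) / (q ^ 2 - 2) * x) := by
  field_simp
  linear_combination (q ^ 2 * x - x * q) * Real.sq_sqrt (zero_le_two : (0 : ℝ) ≤ 2)

end RandomAccess

open RandomAccess in
/-- For `q ≥ 2` and `x1 > 0`, the function
`f(a) = 1 + x1/(x1+(q-1)a) + (q-1)a/(2x1+(q-2)a)` attains its minimum over
`a ∈ [0,∞)` at `a* = ((√2 q - 2)/(q² - 2)) x1`. -/
theorem stmt_2 (q : ℕ) (hq : 2 ≤ q) (x1 : ℝ) (hx1 : 0 < x1)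
    (f : ℝ → ℝ)
    (hf : ∀ a : ℝ, f a = 1 + x1 / (x1 + ((q : ℝ) - 1) * a)
      + ((q : ℝ) - 1) * a / (2 * x1 + ((q : ℝ) - 2) * a)) :
    ∀ a : ℝ, 0 ≤ a →
      f ((Real.sqrt 2 * (q : ℝ) - 2) / ((q : ℝ) ^ 2 - 2) * x1) ≤ f a := by
  intro a ha
  have hq2 : (2 : ℝ) ≤ q := by exact_mod_cast hq
  have hsqrt : 1 ≤ √2 := Real.one_lt_sqrt_two.le
  have hden : 0 < (q : ℝ) ^ 2 - 2 := by nlinarith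
  have hopt : 0 ≤ (√2 * q - 2) / ((q : ℝ) ^ 2 - 2) * x1 := by
    have : 0 ≤ √2 * q - 2 := by nlinarith
    positivity
  have hmin := tail_le_of_sqrt_two_mul_eq (k := (q : ℝ) - 1) (m := (q : ℝ) - 2) hx1
    (by linarith) (by linarith) (by nlinarith) ha hopt
    (sqrt_two_mul_eq_at_optimum q x1 hden.ne')
  unfold tail at hmin
  rw [hf, hf]
  linarith
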